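/- For all real numbers α_0, ε with 0 < ε < α_0 < 1/4, there exist a probability distribution P on ℝ × {−1,1} supported on at most four points x with |x| ≤ 10, a model θ_0 ∈ Θ_1 with L_r(θ_0, P) ≤ α_0, and a model θ_1 ∈ Θ_1 that minimizes over Θ_1 the pseudolabeled ramp loss on the X-marginal of P with pseudolabels generated by θ_0, such that L_r(θ_1, P) ≥ 2α_0 − ε. -/

import Mathlib

open MeasureTheory

noncomputable section

/-- The ramp loss: `r(m) = 1` for `m ≤ 0`, `1 - m` for `0 ≤ m ≤ 1`, `0` for `m ≥ 1`. -/
def ramp (m : ℝ) : ℝ := max 0 (min 1 (1 - m))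

/-- `sign(t) = 1` if `t ≥ 0`, `-1` otherwise. -/
def sgn (t : ℝ) : ℝ := if 0 ≤ t then 1 else -1

/-- The linear model on `ℝ` (`d = 1`): `M_θ(x) = w·x + b` for `θ = (w, b)`. -/
def model1 (θ : ℝ × ℝ) (x : ℝ) : ℝ := θ.1 * x + θ.2

/-- Ramp loss of a 1-D linear model on a distribution over `ℝ × {-1,1}`. -/
def lossR1 (θ : ℝ × ℝ) (P : Measure (ℝ × ℝ)) : ℝ :=
  ∫ p, ramp (p.2 * model1 θ p.1) ∂P

/-- Pseudolabeled ramp loss of `θ'` on the `X`-marginal of `Q`, with pseudolabels from `θ`. -/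
def pseudoLossR1 (θ θ' : ℝ × ℝ) (Q : Measure (ℝ × ℝ)) : ℝ :=
  ∫ x, ramp (sgn (model1 θ x) * model1 θ' x) ∂(Q.map Prod.fst)

/-- `Q` is a `ρ`-shift of `P` (in 1-D). -/
def IsShift1 (P Q : Measure (ℝ × ℝ)) (ρ : ℝ) : Prop :=
  ∃ fneg fpos : ℝ → ℝ, Measurable fneg ∧ Measurable fpos ∧
    (∀ x, |fneg x - x| ≤ ρ) ∧ (∀ x, |fpos x - x| ≤ ρ) ∧
    Q = P.map (fun p => (if p.2 = 1 then fpos p.1 else fneg p.1, p.2))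

lemma ramp_cont : Continuous ramp := by unfold ramp; fun_prop

lemma ramp_nonneg (m : ℝ) : 0 ≤ ramp m := le_max_left _ _

lemma sgn_meas : Measurable sgn := by
  unfold sgn
  exact Measurable.ite (measurableSet_le measurable_const measurable_id)
    measurable_const measurable_const

lemma model1_meas (θ : ℝ × ℝ) : Measurable (model1 θ) := by unfold model1; fun_prop

lemma loss_integrand_meas (θ : ℝ × ℝ) :
    Measurable (fun pr : ℝ × ℝ => ramp (pr.2 * model1 θ pr.1)) := by
  unfold ramp model1; fun_prop

lemma pseudo_integrand_meas (θ θ' : ℝ × ℝ) :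
    Measurable (fun x : ℝ => ramp (sgn (model1 θ x) * model1 θ' x)) :=
  ramp_cont.measurable.comp (((sgn_meas.comp (model1_meas θ)).mul (model1_meas θ')))

lemma integrable_dirac'' {α} [MeasurableSpace α] [MeasurableSingletonClass α]
    (f : α → ℝ) (hf : Measurable f) (a : α) : Integrable f (Measure.dirac a) := by
  refine ⟨hf.aestronglyMeasurable, ?_⟩
  simp [HasFiniteIntegral, MeasureTheory.lintegral_dirac]

lemma integral_three {α} [MeasurableSpace α] [MeasurableSingletonClass α]
    (f : α → ℝ) (hf : Measurable f) (a b c : α) (m q p : ℝ)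
    (hm : 0 ≤ m) (hq : 0 ≤ q) (hp : 0 ≤ p) :
    ∫ x, f x ∂(ENNReal.ofReal m • Measure.dirac a + ENNReal.ofReal q • Measure.dirac b
        + ENNReal.ofReal p • Measure.dirac c) = m * f a + q * f b + p * f c := by
  rw [integral_add_measure, integral_add_measure, integral_smul_measure,
    integral_smul_measure, integral_smul_measure, integral_dirac, integral_dirac,
    integral_dirac, ENNReal.toReal_ofReal hm, ENNReal.toReal_ofReal hq,
    ENNReal.toReal_ofReal hp]
  · ring_nf
  · exact (integrable_dirac'' f hf a).smul_measure ENNReal.ofReal_ne_top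
  · exact (integrable_dirac'' f hf b).smul_measure ENNReal.ofReal_ne_top
  · exact ((integrable_dirac'' f hf a).smul_measure ENNReal.ofReal_ne_top).add_measure
      ((integrable_dirac'' f hf b).smul_measure ENNReal.ofReal_ne_top)
  · exact (integrable_dirac'' f hf c).smul_measure ENNReal.ofReal_ne_top

lemma key_ineq (p q u v : ℝ) (hq : 0 ≤ q) (hpq : q ≤ p) (hv : v ≤ u + 1) :
    q ≤ q * ramp (-u) + p * ramp v := by
  have h0 : (0:ℝ) ≤ ramp v := le_max_left _ _
  have h0' : (0:ℝ) ≤ ramp (-u) := le_max_left _ _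
  rcases le_total u (-1) with h | h
  · have : ramp v = 1 := by
      unfold ramp; rw [min_eq_left (by linarith), max_eq_right (by norm_num)]
    nlinarith
  · rcases le_total 0 u with h2 | h2
    · have : ramp (-u) = 1 := by
        unfold ramp; rw [min_eq_left (by linarith), max_eq_right (by norm_num)]
      nlinarith
    · have h3 : ramp (-u) = 1 + u := by
        unfold ramp; rw [min_eq_right (by linarith), max_eq_right (by linarith)]; ring
      have h4 : -u ≤ ramp v := by
        unfold ramp
        exact (le_min (by linarith) (by linarith : -u ≤ 1 - v)).trans (le_max_right _ _)
      nlinarith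

/-- Even without distribution shift, one round of self-training can nearly double the ramp loss:
there is a distribution on at most four points of `[-10, 10] × {-1,1}`, a model `θ₀ ∈ Θ₁` with
loss `≤ α₀`, and a minimizer `θ₁ ∈ Θ₁` of the pseudolabeled loss with loss `≥ 2α₀ - ε`. -/
theorem stmt12 (α₀ ε : ℝ) (hε : 0 < ε) (hεα : ε < α₀) (hα₀ : α₀ < 1 / 4) :
    ∃ P : Measure (ℝ × ℝ), IsProbabilityMeasure P ∧
      (∃ S : Finset (ℝ × ℝ), S.card ≤ 4 ∧ (∀ p ∈ S, |p.1| ≤ 10 ∧ (p.2 = 1 ∨ p.2 = -1)) ∧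
        P (↑S)ᶜ = 0) ∧
      ∃ θ₀ θ₁ : ℝ × ℝ, |θ₀.1| ≤ 1 ∧ |θ₁.1| ≤ 1 ∧
        lossR1 θ₀ P ≤ α₀ ∧
        (∀ θ'' : ℝ × ℝ, |θ''.1| ≤ 1 → pseudoLossR1 θ₀ θ₁ P ≤ pseudoLossR1 θ₀ θ'' P) ∧
        2 * α₀ - ε ≤ lossR1 θ₁ P := by
  classical
  set m : ℝ := 1 - 2 * α₀ + ε with hm_def
  set q : ℝ := α₀ - ε with hq_def
  set p : ℝ := α₀ with hp_def
  have hm : 0 ≤ m := by simp only [hm_def]; linarith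
  have hq : 0 ≤ q := by simp only [hq_def]; linarith
  have hp : 0 ≤ p := by simp only [hp_def]; linarith
  set A : ℝ × ℝ := (3, 1) with hA
  set B : ℝ × ℝ := (-1, -1) with hB
  set C : ℝ × ℝ := (0, -1) with hC
  set P : Measure (ℝ × ℝ) := ENNReal.ofReal m • Measure.dirac A
      + ENNReal.ofReal q • Measure.dirac B + ENNReal.ofReal p • Measure.dirac C with hP
  -- marginal
  have hmap : P.map Prod.fst = ENNReal.ofReal m • Measure.dirac (3:ℝ)
      + ENNReal.ofReal q • Measure.dirac (-1:ℝ) + ENNReal.ofReal p • Measure.dirac (0:ℝ) := by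
    rw [hP, Measure.map_add _ _ measurable_fst, Measure.map_add _ _ measurable_fst,
      Measure.map_smul, Measure.map_smul, Measure.map_smul,
      Measure.map_dirac' measurable_fst, Measure.map_dirac' measurable_fst,
      Measure.map_dirac' measurable_fst]
  have hloss : ∀ θ : ℝ × ℝ, lossR1 θ P
      = m * ramp ((1:ℝ) * model1 θ 3) + q * ramp ((-1) * model1 θ (-1))
        + p * ramp ((-1) * model1 θ 0) := by
    intro θ
    rw [lossR1, hP, integral_three _ (loss_integrand_meas θ) A B C m q p hm hq hp]
  have hpseudo : ∀ θ' : ℝ × ℝ, pseudoLossR1 (1, 0) θ' P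
      = m * ramp (sgn (model1 (1,0) 3) * model1 θ' 3)
        + q * ramp (sgn (model1 (1,0) (-1)) * model1 θ' (-1))
        + p * ramp (sgn (model1 (1,0) 0) * model1 θ' 0) := by
    intro θ'
    rw [pseudoLossR1, hmap, integral_three _ (pseudo_integrand_meas (1,0) θ') _ _ _ m q p hm hq hp]
  have hsgn3 : sgn (model1 (1,0) 3) = 1 := by norm_num [sgn, model1]
  have hsgnm1 : sgn (model1 (1,0) (-1)) = -1 := by norm_num [sgn, model1]
  have hsgn0 : sgn (model1 (1,0) 0) = 1 := by norm_num [sgn, model1]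
  refine ⟨P, ?_, ?_, (1, 0), (1, 1), by norm_num, by norm_num, ?_, ?_, ?_⟩
  · -- probability measure
    constructor
    rw [hP]
    simp only [Measure.add_apply, Measure.smul_apply, smul_eq_mul, Measure.dirac_apply_of_mem
      (Set.mem_univ _), mul_one]
    rw [← ENNReal.ofReal_add hm hq, ← ENNReal.ofReal_add (by linarith) hp]
    rw [show m + q + p = 1 by simp only [hm_def, hq_def, hp_def]; ring]
    exact ENNReal.ofReal_one
  · -- support
    refine ⟨{A, B, C}, ?_, ?_, ?_⟩
    · calc ({A, B, C} : Finset (ℝ × ℝ)).card ≤ ({B, C} : Finset (ℝ × ℝ)).card + 1 :=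
            Finset.card_insert_le _ _
        _ ≤ (({C} : Finset (ℝ × ℝ)).card + 1) + 1 :=
            Nat.add_le_add_right (Finset.card_insert_le _ _) 1
        _ ≤ 4 := by simp
    · intro pt hpt
      simp only [Finset.mem_insert, Finset.mem_singleton] at hpt
      rcases hpt with rfl | rfl | rfl <;> norm_num [hA, hB, hC]
    · have hS : MeasurableSet ((↑({A, B, C} : Finset (ℝ × ℝ)))ᶜ : Set (ℝ × ℝ)) :=
        (Set.Finite.measurableSet (Finset.finite_toSet _)).compl
      rw [hP]
      simp only [Measure.add_apply, Measure.smul_apply, smul_eq_mul]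
      rw [Measure.dirac_apply' _ hS, Measure.dirac_apply' _ hS, Measure.dirac_apply' _ hS]
      have hAmem : A ∈ (↑({A, B, C} : Finset (ℝ × ℝ)) : Set (ℝ × ℝ)) := by simp
      have hBmem : B ∈ (↑({A, B, C} : Finset (ℝ × ℝ)) : Set (ℝ × ℝ)) := by simp
      have hCmem : C ∈ (↑({A, B, C} : Finset (ℝ × ℝ)) : Set (ℝ × ℝ)) := by simp
      rw [Set.indicator_of_notMem (by simpa using hAmem),
        Set.indicator_of_notMem (by simpa using hBmem),
        Set.indicator_of_notMem (by simpa using hCmem)]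
      simp
  · -- loss θ₀ ≤ α₀
    rw [hloss (1, 0)]
    have : m * ramp ((1:ℝ) * model1 (1,0) 3) + q * ramp ((-1) * model1 (1,0) (-1))
        + p * ramp ((-1) * model1 (1,0) 0) = p := by
      norm_num [ramp, model1]
    rw [this]
  · -- minimality
    intro θ'' hθ''
    rw [hpseudo (1, 1), hpseudo θ'', hsgn3, hsgnm1, hsgn0]
    have hval : m * ramp ((1:ℝ) * model1 (1,1) 3) + q * ramp ((-1) * model1 (1,1) (-1))
        + p * ramp ((1:ℝ) * model1 (1,1) 0) = q := by
      norm_num [ramp, model1]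
    rw [hval]
    have h1 : (-1 : ℝ) * model1 θ'' (-1) = -(model1 θ'' (-1)) := by ring
    have h2 : (1 : ℝ) * model1 θ'' 0 = model1 θ'' 0 := by ring
    rw [h1, h2]
    have hkey := key_ineq p q (model1 θ'' (-1)) (model1 θ'' 0) hq (by simp [hq_def, hp_def]; linarith)
      (by simp only [model1]; nlinarith [abs_le.mp hθ''])
    nlinarith [ramp_nonneg ((1:ℝ) * model1 θ'' 3), hm]
  · -- loss θ₁ ≥ 2α₀ - ε
    rw [hloss (1, 1)]
    have : m * ramp ((1:ℝ) * model1 (1,1) 3) + q * ramp ((-1) * model1 (1,1) (-1))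
        + p * ramp ((-1) * model1 (1,1) 0) = q + p := by
      norm_num [ramp, model1]
    rw [this]
    simp only [hq_def, hp_def]; linarith
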